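/- Let G be a finite simple graph. Then the number of edges of the tangent graph tG plus the number of edges of G equals Σ_{i ∈ V} deg_G(i)². -/

import Mathlib

open Finset SimpleGraph

/-- The tangent graph `tG` of a simple graph `G`: vertices are the darts of `G`,
with `u, v` adjacent iff `π₊(u) = π(v)` or `π(u) = π₊(v)`. -/
def tangentGraph {V : Type*} (G : SimpleGraph V) : SimpleGraph G.Dart where
  Adj u v := u.snd = v.fst ∨ u.fst = v.snd
  symm := ⟨fun u v h => h.symm.imp Eq.symm Eq.symm⟩
  loopless := ⟨fun u h => h.elim (fun h1 => u.snd_ne_fst h1) (fun h2 => u.fst_ne_snd h2)⟩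

/-- The complete tangent graph `τG` of a simple graph `G`: vertices are the darts of `G`,
with `u, v` adjacent iff their base points are adjacent in `G`. -/
def completeTangentGraph {V : Type*} (G : SimpleGraph V) : SimpleGraph G.Dart where
  Adj u v := G.Adj u.fst v.fst
  symm := ⟨fun u v h => h.symm⟩
  loopless := ⟨fun u h => G.loopless.1 _ h⟩

instance {V : Type*} [DecidableEq V] (G : SimpleGraph V) :
    DecidableRel (tangentGraph G).Adj :=
  fun u v => inferInstanceAs (Decidable (u.snd = v.fst ∨ u.fst = v.snd))

instance {V : Type*} (G : SimpleGraph V) [DecidableRel G.Adj] :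
    DecidableRel (completeTangentGraph G).Adj :=
  fun u v => inferInstanceAs (Decidable (G.Adj u.fst v.fst))

/-- The darts of `G` based at the vertex `i`. -/
def dartsAt {V : Type*} [Fintype V] [DecidableEq V] (G : SimpleGraph V)
    [DecidableRel G.Adj] (i : V) : Finset G.Dart :=
  Finset.univ.filter fun u => u.fst = i

/-- The coefficient function `dφ` of the gradient of `φ`. -/
def dop {V : Type*} (G : SimpleGraph V) (φ : V → ℝ) (u : G.Dart) : ℝ :=
  φ u.snd - φ u.fst

/-- The Laplacian of `φ : V → ℝ` on `G`, `Δφ(i) = -2·Σ_{π(u)=i} dφ(u)`. -/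
def gLap {V : Type*} [Fintype V] [DecidableEq V] (G : SimpleGraph V)
    [DecidableRel G.Adj] (φ : V → ℝ) (i : V) : ℝ :=
  -2 * ∑ u ∈ dartsAt G i, dop G φ u

/-- The Laplacian of a real function on the vertices of an arbitrary finite simple graph:
`Δ_H h(x) = -2·Σ_{y ~ x} (h y - h x)`. -/
def lap {W : Type*} [Fintype W] (H : SimpleGraph W) [DecidableRel H.Adj]
    (h : W → ℝ) (x : W) : ℝ :=
  -2 * ∑ y ∈ H.neighborFinset x, (h y - h x)

/-- The divergence of `f : Darts(G) → ℝ`, `Div f(i) = Σ_{π(u)=i} (f(ū) - f(u))`. -/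
def divg {V : Type*} [Fintype V] [DecidableEq V] (G : SimpleGraph V)
    [DecidableRel G.Adj] (f : G.Dart → ℝ) (i : V) : ℝ :=
  ∑ u ∈ dartsAt G i, (f u.symm - f u)

/-!
The neighbours of a dart `u` in `tG` are the darts leaving `π₊(u)` and the darts entering `π(u)`;
the reversed dart `ū` is the only one of both kinds, so `deg_tG(u) + 1 = deg(π u) + deg(π₊ u)`.
Summing over all darts, each vertex `i` occurs `deg(i)` times as a base point and as many times
as an end point, so `2|E_tG| + 2|E_G| = 2 Σ_i deg(i)²` by the handshake lemma in `tG` and in `G`.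
-/

namespace SimpleGraph

variable {V : Type*} [Fintype V] (G : SimpleGraph V) [DecidableRel G.Adj]

theorem card_filter_dart_snd_eq_degree [DecidableEq V] (i : V) :
    #{u : G.Dart | u.snd = i} = G.degree i := by
  rw [← G.dart_fst_fiber_card_eq_degree i]
  exact card_nbij' Dart.symm Dart.symm (fun u hu => by simpa using hu)
    (fun u hu => by simpa using hu) (fun u _ => u.symm_symm) (fun u _ => u.symm_symm)

theorem sum_dart_fst {M : Type*} [AddCommMonoid M] (f : V → M) :
    ∑ u : G.Dart, f u.fst = ∑ i, G.degree i • f i := by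
  classical
  rw [← sum_fiberwise univ (·.fst)]
  refine sum_congr rfl fun i _ => ?_
  rw [sum_congr rfl fun u hu => congrArg f (mem_filter.mp hu).2, sum_const,
    G.dart_fst_fiber_card_eq_degree]

theorem sum_dart_snd {M : Type*} [AddCommMonoid M] (f : V → M) :
    ∑ u : G.Dart, f u.snd = ∑ u : G.Dart, f u.fst :=
  Equiv.sum_comp (Dart.symm_involutive.toPerm _) fun u => f u.fst

theorem tangentGraph_degree_add_one [DecidableEq V] (u : G.Dart) :
    (tangentGraph G).degree u + 1 = G.degree u.fst + G.degree u.snd := by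
  have hneighbors : (tangentGraph G).neighborFinset u =
      ({v | v.fst = u.snd} : Finset G.Dart) ∪ ({v | v.snd = u.fst} : Finset G.Dart) := by
    ext v
    simp only [mem_neighborFinset, mem_union, mem_filter, mem_univ, true_and]
    exact or_congr eq_comm eq_comm
  have hboth : ({v | v.fst = u.snd} : Finset G.Dart) ∩ ({v | v.snd = u.fst} : Finset G.Dart) =
      {u.symm} := by
    ext v
    simp only [mem_inter, mem_filter, mem_univ, true_and, mem_singleton]
    constructor
    · rintro ⟨h₁, h₂⟩
      exact Dart.ext _ _ (Prod.ext h₁ h₂)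
    · rintro rfl
      simp
  rw [← card_neighborFinset_eq_degree, hneighbors, ← card_singleton u.symm, ← hboth,
    card_union_add_card_inter, G.dart_fst_fiber_card_eq_degree,
    card_filter_dart_snd_eq_degree, add_comm]

end SimpleGraph

/-- `|E_{tG}| + |E_G| = Σ_i deg_G(i)²`. -/
theorem card_edges_tangentGraph {V : Type*} [Fintype V] [DecidableEq V]
    (G : SimpleGraph V) [DecidableRel G.Adj] :
    (tangentGraph G).edgeFinset.card + G.edgeFinset.card = ∑ i : V, G.degree i ^ 2 := by
  have hsum : ∑ u : G.Dart, ((tangentGraph G).degree u + 1) = 2 * ∑ i, G.degree i ^ 2 := by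
    rw [sum_congr rfl fun u _ => G.tangentGraph_degree_add_one u, sum_add_distrib,
      G.sum_dart_snd fun i => G.degree i, G.sum_dart_fst fun i => G.degree i, ← two_mul]
    simp only [smul_eq_mul, sq]
  rw [sum_add_distrib, sum_degrees_eq_twice_card_edges, sum_const, card_univ,
    G.dart_card_eq_twice_card_edges, smul_eq_mul, mul_one] at hsum
  omega
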